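/- Monotonicity of the diffusion constraint: fix d ∈ {1,2,3} and a finite tile set T. Let α and β be assemblies over T with dom α ⊆ dom β and β agreeing with α on dom α, and let p ∈ ℤ^d with p ∉ dom β. If there is no diffusion path for p with respect to α (i.e., every path in the grid graph of ℤ^d from p to a point outside the minimal bounding box of α contains a point of dom α), then there is no diffusion path for p with respect to β. Consequently, in the diffusion-restricted d-dimensional aTAM, once a location has all diffusion paths blocked in some producible assembly, no tile can ever attach at that location in any extension of that assembly. -/
import Mathlib


open scoped Classical

noncomputable section

namespace ATAM

/-- A glue: a label (a finite string over the alphabet) together with a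
nonnegative integer strength. -/
abbrev Glue : Type := String × ℕ

/-- A `d`-dimensional tile type: for each of the `d` axes, a glue on the
positive face and a glue on the negative face (`2d` glues in total). -/
abbrev TileType (d : ℕ) : Type := Fin d → Glue × Glue

/-- Points of the integer lattice `ℤ^d`. -/
abbrev Pt (d : ℕ) : Type := Fin d → ℤ

/-- A configuration: a partial placement of tile types on `ℤ^d`. -/
abbrev Config (d : ℕ) : Type := Pt d → Option (TileType d)

variable {d : ℕ}

/-- The domain of a configuration. -/
def dom (α : Config d) : Set (Pt d) := {p | α p ≠ none}

/-- Grid-graph adjacency on `ℤ^d` (Euclidean, equivalently `ℓ¹`, distance one). -/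
def adj (p q : Pt d) : Prop := (∑ i, |p i - q i|) = 1

/-- A set of lattice points is connected in the grid graph of `ℤ^d`. -/
def ConnectedSet (S : Set (Pt d)) : Prop :=
  ∀ p ∈ S, ∀ q ∈ S,
    Relation.ReflTransGen (fun a b => adj a b ∧ a ∈ S ∧ b ∈ S) p q

/-- The strength with which a tile of type `t` at `p` and a tile of type `t'`
at `q` interact: nonzero only if `p` and `q` are adjacent and the abutting
glues are equal (in label and strength) with positive strength. -/
def bond (t t' : TileType d) (p q : Pt d) : ℕ :=
  ∑ i : Fin d,
    ((if q = Function.update p i (p i + 1) ∧ (t i).1 = (t' i).2 ∧ 0 < (t i).1.2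
        then (t i).1.2 else 0) +
     (if p = Function.update q i (q i + 1) ∧ (t i).2 = (t' i).1 ∧ 0 < (t i).2.2
        then (t i).2.2 else 0))

/-- The strength of the bond between positions `p` and `q` in configuration `α`. -/
def bondAt (α : Config d) (p q : Pt d) : ℕ :=
  match α p, α q with
  | some t, some t' => bond t t' p q
  | _, _ => 0

/-- `α` is `τ`-stable: every cut of its binding graph has weight at least `τ`. -/
def Stable (τ : ℕ) (α : Config d) : Prop :=
  ∀ A B : Set (Pt d), A.Nonempty → B.Nonempty → Disjoint A B → A ∪ B = dom α →
    ∃ F : Finset (Pt d × Pt d),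
      (∀ e ∈ F, e.1 ∈ A ∧ e.2 ∈ B) ∧ τ ≤ ∑ e ∈ F, bondAt α e.1 e.2

/-- `β` extends `α`, i.e. `α` is a subassembly of `β` (`α ⊑ β`). -/
def Extends (α β : Config d) : Prop := ∀ p t, α p = some t → β p = some t

/-- A `d`-dimensional tile assembly system `(T, σ, τ)`: a finite tile set, a
finite `τ`-stable seed assembly over the tile set, and a temperature `τ ≥ 1`. -/
structure TAS (d : ℕ) where
  tileset : Finset (TileType d)
  seed : Config d
  temp : ℕ
  temp_pos : 0 < temp
  seed_nonempty : (dom seed).Nonempty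
  seed_connected : ConnectedSet (dom seed)
  seed_finite : (dom seed).Finite
  seed_tiles : ∀ p t, seed p = some t → t ∈ tileset
  seed_stable : Stable temp seed

/-- One step of the (unrestricted) aTAM: a single tile of the tile set
`τ`-stably attaches at an empty location. -/
def Attach (T : TAS d) (α β : Config d) : Prop :=
  ∃ p t, p ∉ dom α ∧ t ∈ T.tileset ∧
    β = Function.update α p (some t) ∧ Stable T.temp β

/-- `q` lies outside the minimal bounding box of `α`. -/
def OutsideBBox (α : Config d) (q : Pt d) : Prop :=
  ∃ i : Fin d, (∀ p ∈ dom α, q i < p i) ∨ (∀ p ∈ dom α, p i < q i)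

/-- There is a diffusion path for `p` with respect to `α`: a path in the grid
graph of `ℤ^d` from `p` to a point outside the minimal bounding box of `α`,
none of whose points lies in `dom α`. -/
def HasDiffusionPath (α : Config d) (p : Pt d) : Prop :=
  ∃ (k : ℕ) (x : ℕ → Pt d), x 0 = p ∧ (∀ j < k, adj (x j) (x (j + 1))) ∧
    (∀ j ≤ k, x j ∉ dom α) ∧ OutsideBBox α (x k)

/-- One step of the diffusion-restricted aTAM: additionally the attachment
location must admit a diffusion path. -/
def AttachD (T : TAS d) (α β : Config d) : Prop :=
  ∃ p t, p ∉ dom α ∧ t ∈ T.tileset ∧ HasDiffusionPath α p ∧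
    β = Function.update α p (some t) ∧ Stable T.temp β

/-- A (possibly stuttering) chain of single-tile attachment steps with respect
to the attachment relation `A`. -/
def Chain (A : Config d → Config d → Prop) (f : ℕ → Config d) : Prop :=
  ∀ n, f n = f (n + 1) ∨ A (f n) (f (n + 1))

/-- `β` is the (limiting) result of the sequence `f`. -/
def Limit (f : ℕ → Config d) (β : Config d) : Prop :=
  ∀ p t, β p = some t ↔ ∃ n, f n p = some t

/-- `β` is producible from `α` by zero or more (possibly infinitely many)
single-tile attachment steps, with respect to the attachment relation `A`. -/
def ProducesFrom (A : Config d → Config d → Prop) (α β : Config d) : Prop :=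
  ∃ f : ℕ → Config d, f 0 = α ∧ Chain A f ∧ Limit f β

/-- `α` admits no attachment step: it is terminal. -/
def Terminal (A : Config d → Config d → Prop) (α : Config d) : Prop :=
  ∀ β, ¬ A α β

/-- The system with seed `σ` and attachment relation `A` is directed: it has
exactly one producible terminal assembly. -/
def DirectedSys (A : Config d → Config d → Prop) (σ : Config d) : Prop :=
  ∃! α, ProducesFrom A σ α ∧ Terminal A α

/-- The `m`-block macrotile of `α` at block position `x`. -/
def mblock (m : ℕ) (α : Config d) (x : Pt d) : Config d :=
  fun y => if ∀ i, 0 ≤ y i ∧ y i < (m : ℤ) then α (fun i => (m : ℤ) * x i + y i) else none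

/-- A (partial) macrotile representation function. -/
abbrev RepFn (d : ℕ) : Type := Config d → Option (TileType d)

/-- `R` is a valid macrotile representation function into the tile set `Tset`:
it is monotone with respect to the subassembly relation on macrotiles, and its
values are tile types of `Tset`. -/
def ValidRep (Tset : Finset (TileType d)) (R : RepFn d) : Prop :=
  (∀ γ γ', Extends γ γ' → ∀ t, R γ = some t → R γ' = some t) ∧
  (∀ γ t, R γ = some t → t ∈ Tset)

/-- The induced assembly representation function `R*`. -/
def repStar (R : RepFn d) (m : ℕ) (α' : Config d) : Config d :=
  fun x => R (mblock m α' x)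

/-- Block position `x` holds a nonempty `m`-block of `α'`. -/
def NonemptyBlock (m : ℕ) (α' : Config d) (x : Pt d) : Prop :=
  ∃ y, mblock m α' x y ≠ none

/-- `α'` maps cleanly to `R*(α')`: every nonempty block position lies in the
domain of `R*(α')` or is (non-diagonally) adjacent to a point of that domain,
or `α'` has at most one nonempty block. -/
def MapsCleanly (R : RepFn d) (m : ℕ) (α' : Config d) : Prop :=
  (∀ x, NonemptyBlock m α' x →
      repStar R m α' x ≠ none ∨ ∃ u, adj x u ∧ repStar R m α' u ≠ none) ∨
  (∃ x₀, ∀ x, NonemptyBlock m α' x → x = x₀)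

/-- The system with attachment relation `A_S` and seed `σ_S` simulates the
system with attachment relation `A_T` and seed `σ_T` at scale `m` under the
representation function `R`: they have equivalent productions, the simulated
system follows the simulator, and the simulator models the simulated system. -/
structure SimulatesVia (A_T : Config d → Config d → Prop) (σ_T : Config d)
    (A_S : Config d → Config d → Prop) (σ_S : Config d)
    (R : RepFn d) (m : ℕ) : Prop where
  /-- `{R*(α') : α' ∈ 𝒜[𝒮]} = 𝒜[𝒯]` -/
  prod_eq : ∀ α, ProducesFrom A_T σ_T α ↔
      ∃ α', ProducesFrom A_S σ_S α' ∧ repStar R m α' = α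
  /-- `{R*(α') : α' ∈ 𝒜□[𝒮]} = 𝒜□[𝒯]` -/
  term_eq : ∀ α, (ProducesFrom A_T σ_T α ∧ Terminal A_T α) ↔
      ∃ α', (ProducesFrom A_S σ_S α' ∧ Terminal A_S α') ∧ repStar R m α' = α
  /-- every producible assembly of the simulator maps cleanly -/
  clean : ∀ α', ProducesFrom A_S σ_S α' → MapsCleanly R m α'
  /-- `𝒯` follows `𝒮` -/
  follows : ∀ α' β', ProducesFrom A_S σ_S α' → ProducesFrom A_S σ_S β' →
      ProducesFrom A_S α' β' →
      ProducesFrom A_T (repStar R m α') (repStar R m β')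
  /-- `𝒮` models `𝒯` -/
  models : ∀ α, ProducesFrom A_T σ_T α → ∃ Ps : Set (Config d),
      (∀ α' ∈ Ps, ProducesFrom A_S σ_S α' ∧ repStar R m α' = α) ∧
      ∀ β, ProducesFrom A_T σ_T β → ProducesFrom A_T α β →
        (∀ α' ∈ Ps, ∃ β', ProducesFrom A_S α' β' ∧ repStar R m β' = β) ∧
        (∀ α'' β', ProducesFrom A_S σ_S α'' → repStar R m α'' = α →
            ProducesFrom A_S α'' β' → repStar R m β' = β →
            ∃ α' ∈ Ps, ProducesFrom A_S α' α'')

/-- `US` simulates `T` at scale `m` under `R`, both with the standard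
(unrestricted) aTAM dynamics. -/
def Simulates (US T : TAS d) (R : RepFn d) (m : ℕ) : Prop :=
  SimulatesVia (Attach T) T.seed (Attach US) US.seed R m

/-- `US` simulates `T` at scale `m` under `R`, both with the
diffusion-restricted dynamics. -/
def SimulatesD (US T : TAS d) (R : RepFn d) (m : ℕ) : Prop :=
  SimulatesVia (AttachD T) T.seed (AttachD US) US.seed R m

end ATAM

open ATAM

private lemma extends_dom_subset {d : ℕ} {α β : Config d} (h : Extends α β) :
    dom α ⊆ dom β := by
  intro p hp
  simp only [dom, Set.mem_setOf_eq] at hp ⊢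
  obtain ⟨t, ht⟩ := Option.ne_none_iff_exists'.mp hp
  rw [h p t ht]; simp

private lemma diff_mono {d : ℕ} {α β : Config d} (h : Extends α β) {p : Pt d}
    (hβ : HasDiffusionPath β p) : HasDiffusionPath α p := by
  obtain ⟨k, x, h0, hadj, havoid, i, hbb⟩ := hβ
  refine ⟨k, x, h0, hadj, fun j hj hm => havoid j hj (extends_dom_subset h hm), i, ?_⟩
  rcases hbb with hl | hr
  · exact Or.inl fun q hq => hl q (extends_dom_subset h hq)
  · exact Or.inr fun q hq => hr q (extends_dom_subset h hq)

/-- **Monotonicity of the diffusion constraint.** Fix `d ∈ {1,2,3}`. If `β`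
extends `α` and `p ∉ dom β`, and there is no diffusion path for `p` with
respect to `α`, then there is no diffusion path for `p` with respect to `β`.
Consequently, in the diffusion-restricted `d`-dimensional aTAM, once a
location has all diffusion paths blocked in some producible assembly, no tile
can ever attach at that location in any extension of that assembly. -/
theorem diffusion_path_blocking {d : ℕ} (hd : d = 1 ∨ d = 2 ∨ d = 3) :
    (∀ α β : Config d, Extends α β → ∀ p : Pt d, p ∉ dom β →
        ¬ HasDiffusionPath α p → ¬ HasDiffusionPath β p) ∧
    (∀ (T : TAS d) (α : Config d) (p : Pt d),
        ProducesFrom (AttachD T) T.seed α → p ∉ dom α →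
        ¬ HasDiffusionPath α p →
        ∀ β, ProducesFrom (AttachD T) α β → p ∉ dom β) := by
  constructor
  · intro α β hext p _ hα hβ
    exact hα (diff_mono hext hβ)
  · intro T α p _ hpα hnopath β hprod hpβ
    obtain ⟨f, hf0, hchain, hlim⟩ := hprod
    have key : ∀ n, p ∉ dom (f n) ∧ ¬ HasDiffusionPath (f n) p := by
      intro n
      induction n with
      | zero => rw [hf0]; exact ⟨hpα, hnopath⟩
      | succ n ih =>
        rcases hchain n with heq | ⟨q, t, hq, _, hqpath, hupd, _⟩
        · rw [← heq]; exact ih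
        · have hqp : q ≠ p := fun h => ih.2 (h ▸ hqpath)
          have hext : Extends (f n) (f (n + 1)) := by
            intro r s hr
            rw [hupd, Function.update_apply]
            split
            · rename_i h; exfalso; apply hq
              simp only [dom, Set.mem_setOf_eq, ← h, hr]; simp
            · exact hr
          have hdom : p ∉ dom (f (n + 1)) := by
            rw [hupd, dom, Set.mem_setOf_eq, Function.update_apply,
              if_neg (fun h => hqp h.symm)]
            exact ih.1
          exact ⟨hdom, fun h => ih.2 (diff_mono hext h)⟩
    simp only [dom, Set.mem_setOf_eq] at hpβ
    obtain ⟨t, ht⟩ := Option.ne_none_iff_exists'.mp hpβ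
    obtain ⟨n, hn⟩ := (hlim p t).mp ht
    exact (key n).1 (by rw [dom, Set.mem_setOf_eq, hn]; simp)
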